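/- arXiv:2201.11678 — 6 statements merged into one kernel-verified Lean document; each statement's English description precedes it below -/
import Mathlib

section
/- Let Q = (1−α)·P₁ + α·P₂ with α ∈ (0,1). Assume that log(dP₁/dQ) is integrable with respect to both P₁ and P₂ and that KL(P₁‖Q) and KL(Q‖P₁) are finite. Then (i) ∫ log((dP₁/dQ)(x)) dP₁(x) = KL(P₁‖Q) = KL(P₁‖P(1−α)) ≥ 0, and (ii) ∫ log((dP₁/dQ)(x)) dP₂(x) = −[(1/α)·KL(Q‖P₁) + ((1−α)/α)·KL(P₁‖Q)] = −f₁(α, 1−α) ≤ 0. (This is Proposition 1 of the paper in the case T_split ≤ T*, where α = α₁ = (n−T*)/(n−T_split): the expected log density ratio of P_left = P₁ against P_right = Q is nonnegative before the change point and nonpositive after it.) -/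
open MeasureTheory ProbabilityTheory

/-- Kullback–Leibler divergence `KL(μ‖ν) = ∫ log (dμ/dν) dμ`. -/
noncomputable def KL {Ω : Type*} [MeasurableSpace Ω] (μ ν : Measure Ω) : ℝ :=
  ∫ x, Real.log ((μ.rnDeriv ν x).toReal) ∂μ

/-- The mixture distribution `P(λ) = λ·P₁ + (1-λ)·P₂`. -/
noncomputable def mix {Ω : Type*} [MeasurableSpace Ω] (P₁ P₂ : Measure Ω) (l : ℝ) :
    Measure Ω :=
  (ENNReal.ofReal l) • P₁ + (ENNReal.ofReal (1 - l)) • P₂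

/-!
Write `g = log (dP₁/dQ)`. Its `P₁`-mean is `KL(P₁‖Q)` by definition, and since
`dQ/dP₁ = (dP₁/dQ)⁻¹` its `Q`-mean is `-KL(Q‖P₁)`. As `Q = (1-α)P₁ + αP₂`, the `Q`-mean is the
same convex combination of the `P₁`- and `P₂`-means, which can be solved for the `P₂`-mean.
Both signs then follow from Gibbs' inequality.
-/

namespace KL

variable {Ω : Type*} [MeasurableSpace Ω] {μ ν : Measure Ω}

lemma nonneg [IsProbabilityMeasure μ] [IsProbabilityMeasure ν] (hμν : μ ≪ ν) :
    0 ≤ KL μ ν :=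
  ENNReal.toReal_nonneg.trans_eq (InformationTheory.toReal_klDiv_of_measure_eq hμν (by simp))

lemma integral_llr_swap_eq_neg [SigmaFinite μ] [SigmaFinite ν] (hμν : μ ≪ ν) :
    ∫ x, llr ν μ x ∂μ = -KL μ ν := by
  rw [KL, ← integral_neg]
  exact integral_congr_ae (neg_llr hμν).symm

end KL

namespace mix

variable {Ω : Type*} [MeasurableSpace Ω] {P₁ P₂ : Measure Ω} {l : ℝ}

instance [IsFiniteMeasure P₁] [IsFiniteMeasure P₂] : IsFiniteMeasure (mix P₁ P₂ l) where
  measure_univ_lt_top := by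
    simp only [mix, Measure.coe_add, Pi.add_apply, Measure.smul_apply, smul_eq_mul]
    exact ENNReal.add_lt_top.2 ⟨ENNReal.mul_lt_top ENNReal.ofReal_lt_top (measure_lt_top _ _),
      ENNReal.mul_lt_top ENNReal.ofReal_lt_top (measure_lt_top _ _)⟩

lemma isProbabilityMeasure [IsProbabilityMeasure P₁] [IsProbabilityMeasure P₂]
    (hl : l ∈ Set.Icc (0 : ℝ) 1) : IsProbabilityMeasure (mix P₁ P₂ l) := by
  constructor
  simp only [mix, Measure.coe_add, Pi.add_apply, Measure.smul_apply, measure_univ, smul_eq_mul,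
    mul_one]
  rw [← ENNReal.ofReal_add hl.1 (sub_nonneg.2 hl.2)]
  simp

lemma absolutelyContinuous_left (hl : 0 < l) : P₁ ≪ mix P₁ P₂ l :=
  (Measure.absolutelyContinuous_smul (ENNReal.ofReal_pos.2 hl).ne').trans
    (Measure.AbsolutelyContinuous.add_right .rfl _)

lemma absolutelyContinuous_of_right (h₂₁ : P₂ ≪ P₁) : mix P₁ P₂ l ≪ P₁ :=
  Measure.AbsolutelyContinuous.add_left_iff.2
    ⟨Measure.smul_absolutelyContinuous, Measure.smul_absolutelyContinuous.trans h₂₁⟩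

lemma integral_eq (hl : l ∈ Set.Icc (0 : ℝ) 1) {f : Ω → ℝ}
    (h₁ : Integrable f P₁) (h₂ : Integrable f P₂) :
    ∫ x, f x ∂mix P₁ P₂ l = l * ∫ x, f x ∂P₁ + (1 - l) * ∫ x, f x ∂P₂ := by
  rw [mix, integral_add_measure (h₁.smul_measure ENNReal.ofReal_ne_top)
    (h₂.smul_measure ENNReal.ofReal_ne_top), integral_smul_measure, integral_smul_measure,
    ENNReal.toReal_ofReal hl.1, ENNReal.toReal_ofReal (sub_nonneg.2 hl.2), smul_eq_mul,
    smul_eq_mul]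

lemma mul_KL_add_mul_integral_llr [IsFiniteMeasure P₁] [IsFiniteMeasure P₂]
    (hl : l ∈ Set.Icc (0 : ℝ) 1) (h₂₁ : P₂ ≪ P₁)
    (h₁ : Integrable (llr P₁ (mix P₁ P₂ l)) P₁) (h₂ : Integrable (llr P₁ (mix P₁ P₂ l)) P₂) :
    l * KL P₁ (mix P₁ P₂ l) + (1 - l) * ∫ x, llr P₁ (mix P₁ P₂ l) x ∂P₂
      = -KL (mix P₁ P₂ l) P₁ := by
  rw [← KL.integral_llr_swap_eq_neg (absolutelyContinuous_of_right h₂₁), integral_eq hl h₁ h₂]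
  rfl

end mix

theorem stmt0_general {Ω : Type*} [MeasurableSpace Ω] (P₁ P₂ : Measure Ω)
    [IsProbabilityMeasure P₁] [IsProbabilityMeasure P₂]
    (hac₂ : P₂ ≪ P₁)
    (α : ℝ) (hα : α ∈ Set.Ioo (0 : ℝ) 1)
    (Q : Measure Ω) (hQ : Q = mix P₁ P₂ (1 - α))
    (hInt₁ : Integrable (fun x => Real.log ((P₁.rnDeriv Q x).toReal)) P₁)
    (hInt₂ : Integrable (fun x => Real.log ((P₁.rnDeriv Q x).toReal)) P₂) :
    ((∫ x, Real.log ((P₁.rnDeriv Q x).toReal) ∂P₁) = KL P₁ Q ∧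
      KL P₁ Q = KL P₁ (mix P₁ P₂ (1 - α)) ∧ 0 ≤ KL P₁ Q) ∧
    ((∫ x, Real.log ((P₁.rnDeriv Q x).toReal) ∂P₂)
        = -((1 / α) * KL Q P₁ + ((1 - α) / α) * KL P₁ Q) ∧
      -((1 / α) * KL Q P₁ + ((1 - α) / α) * KL P₁ Q) ≤ 0) := by
  obtain ⟨hα₀, hα₁⟩ := hα
  subst hQ
  have hl : 1 - α ∈ Set.Icc (0 : ℝ) 1 := ⟨by linarith, by linarith⟩
  have := mix.isProbabilityMeasure (P₁ := P₁) (P₂ := P₂) hl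
  have hKL₁ : 0 ≤ KL P₁ (mix P₁ P₂ (1 - α)) :=
    KL.nonneg (mix.absolutelyContinuous_left (by linarith))
  have hKL₂ : 0 ≤ KL (mix P₁ P₂ (1 - α)) P₁ :=
    KL.nonneg (mix.absolutelyContinuous_of_right hac₂)
  have hmean := mix.mul_KL_add_mul_integral_llr hl hac₂ hInt₁ hInt₂
  rw [sub_sub_cancel] at hmean
  refine ⟨⟨rfl, rfl, hKL₁⟩, ?_, ?_⟩
  · rw [← llr_def]
    field_simp
    linear_combination hmean
  · have h₁ : 0 ≤ (1 / α) * KL (mix P₁ P₂ (1 - α)) P₁ := by positivity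
    have h₂ : 0 ≤ ((1 - α) / α) * KL P₁ (mix P₁ P₂ (1 - α)) :=
      mul_nonneg (div_nonneg hl.1 hα₀.le) hKL₁
    linarith

/-- Proposition 1 of the paper, case `T_split ≤ T*`: with `Q = (1-α)·P₁ + α·P₂`,
the `P₁`-expectation of `log (dP₁/dQ)` equals `KL(P₁‖Q) = KL(P₁‖P(1-α)) ≥ 0` and the
`P₂`-expectation equals `-f₁(α, 1-α) = -[(1/α)·KL(Q‖P₁) + ((1-α)/α)·KL(P₁‖Q)] ≤ 0`. -/
theorem stmt0 {Ω : Type*} [MeasurableSpace Ω] (P₁ P₂ : Measure Ω)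
    [IsProbabilityMeasure P₁] [IsProbabilityMeasure P₂]
    (hac₁ : P₁ ≪ P₂) (hac₂ : P₂ ≪ P₁)
    (α : ℝ) (hα : α ∈ Set.Ioo (0 : ℝ) 1)
    (Q : Measure Ω) (hQ : Q = mix P₁ P₂ (1 - α))
    (hInt₁ : Integrable (fun x => Real.log ((P₁.rnDeriv Q x).toReal)) P₁)
    (hInt₂ : Integrable (fun x => Real.log ((P₁.rnDeriv Q x).toReal)) P₂)
    (hKLQ : Integrable (fun x => Real.log ((Q.rnDeriv P₁ x).toReal)) Q) :
    ((∫ x, Real.log ((P₁.rnDeriv Q x).toReal) ∂P₁) = KL P₁ Q ∧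
      KL P₁ Q = KL P₁ (mix P₁ P₂ (1 - α)) ∧ 0 ≤ KL P₁ Q) ∧
    ((∫ x, Real.log ((P₁.rnDeriv Q x).toReal) ∂P₂)
        = -((1 / α) * KL Q P₁ + ((1 - α) / α) * KL P₁ Q) ∧
      -((1 / α) * KL Q P₁ + ((1 - α) / α) * KL P₁ Q) ≤ 0) :=
  stmt0_general P₁ P₂ hac₂ α hα Q hQ hInt₁ hInt₂
end

section
/- Let P = α·P₁ + (1−α)·P₂ with α ∈ (0,1). Assume that log(dP/dP₂) is integrable with respect to both P₁ and P₂ and that KL(P‖P₂) and KL(P₂‖P) are finite. Then (i) ∫ log((dP/dP₂)(x)) dP₁(x) = (1/α)·KL(P‖P₂) + ((1−α)/α)·KL(P₂‖P) = f₂(α, α) ≥ 0, and (ii) ∫ log((dP/dP₂)(x)) dP₂(x) = −KL(P₂‖P) = −KL(P₂‖P(α)) ≤ 0. (This is Proposition 1 of the paper in the case T_split ≥ T*, where α = α₂ = T*/T_split: the expected log density ratio of P_left = P against P_right = P₂ is nonnegative before the change point and nonpositive after it.) -/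
open MeasureTheory ProbabilityTheory

/-- Gibbs inequality: the KL divergence between mutually absolutely continuous probability
measures is nonnegative, assuming integrability of the log-likelihood ratio. -/
lemma KL_nonneg {Ω : Type*} [MeasurableSpace Ω] (μ ν : Measure Ω)
    [IsProbabilityMeasure μ] [IsProbabilityMeasure ν]
    (hμν : μ ≪ ν) (hνμ : ν ≪ μ)
    (hInt : Integrable (fun x => Real.log ((μ.rnDeriv ν x).toReal)) μ) :
    0 ≤ KL μ ν := by
  have hInt' : Integrable (fun x => 1 - (ν.rnDeriv μ x).toReal) μ :=
    (integrable_const 1).sub (Measure.integrable_toReal_rnDeriv)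
  have h_le : (fun x => 1 - (ν.rnDeriv μ x).toReal)
      ≤ᵐ[μ] fun x => Real.log ((μ.rnDeriv ν x).toReal) := by
    filter_upwards [Measure.inv_rnDeriv hμν, Measure.rnDeriv_pos' hμν,
      Measure.rnDeriv_lt_top ν μ] with x hinv hpos hlt
    have hpos' : 0 < (ν.rnDeriv μ x).toReal := ENNReal.toReal_pos hpos.ne' hlt.ne
    have hlog : Real.log ((ν.rnDeriv μ x).toReal) ≤ (ν.rnDeriv μ x).toReal - 1 :=
      Real.log_le_sub_one_of_pos hpos'
    have heq : Real.log ((μ.rnDeriv ν x).toReal) = -Real.log ((ν.rnDeriv μ x).toReal) := by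
      rw [← Real.log_inv, ← ENNReal.toReal_inv]
      congr 1
      rw [← hinv]
      simp
    rw [heq]
    linarith
  have h1 : ∫ x, (1 - (ν.rnDeriv μ x).toReal) ∂μ ≤ KL μ ν :=
    integral_mono_ae hInt' hInt h_le
  have h2 : ∫ x, (1 - (ν.rnDeriv μ x).toReal) ∂μ = 0 := by
    rw [integral_sub (integrable_const 1) Measure.integrable_toReal_rnDeriv,
      integral_const, Measure.integral_toReal_rnDeriv hνμ]
    simp
  linarith [h2 ▸ h1]

/-- Proposition 1 of the paper, case `T_split ≥ T*`: with `P = α·P₁ + (1-α)·P₂`,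
the `P₁`-expectation of `log (dP/dP₂)` equals
`f₂(α, α) = (1/α)·KL(P‖P₂) + ((1-α)/α)·KL(P₂‖P) ≥ 0` and the `P₂`-expectation equals
`-KL(P₂‖P) = -KL(P₂‖P(α)) ≤ 0`. -/
theorem stmt1 {Ω : Type*} [MeasurableSpace Ω] (P₁ P₂ : Measure Ω)
    [IsProbabilityMeasure P₁] [IsProbabilityMeasure P₂]
    (hac₁ : P₁ ≪ P₂) (hac₂ : P₂ ≪ P₁)
    (α : ℝ) (hα : α ∈ Set.Ioo (0 : ℝ) 1)
    (P : Measure Ω) (hP : P = mix P₁ P₂ α)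
    (hInt₁ : Integrable (fun x => Real.log ((P.rnDeriv P₂ x).toReal)) P₁)
    (hInt₂ : Integrable (fun x => Real.log ((P.rnDeriv P₂ x).toReal)) P₂)
    (hKL₁ : Integrable (fun x => Real.log ((P.rnDeriv P₂ x).toReal)) P)
    (hKL₂ : Integrable (fun x => Real.log ((P₂.rnDeriv P x).toReal)) P₂) :
    ((∫ x, Real.log ((P.rnDeriv P₂ x).toReal) ∂P₁)
        = (1 / α) * KL P P₂ + ((1 - α) / α) * KL P₂ P ∧
      0 ≤ (1 / α) * KL P P₂ + ((1 - α) / α) * KL P₂ P) ∧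
    ((∫ x, Real.log ((P.rnDeriv P₂ x).toReal) ∂P₂) = -KL P₂ P ∧
      KL P₂ P = KL P₂ (mix P₁ P₂ α) ∧ -KL P₂ P ≤ 0) := by
  obtain ⟨hα0, hα1⟩ := hα
  have hα1' : (0:ℝ) < 1 - α := by linarith
  -- P is a probability measure
  have hPprob : IsProbabilityMeasure P := by
    rw [hP]
    constructor
    simp only [mix, Measure.add_apply, Measure.smul_apply, smul_eq_mul, measure_univ, mul_one]
    rw [← ENNReal.ofReal_add hα0.le hα1'.le]
    norm_num
  -- absolute continuity
  have hPac : P ≪ P₂ := by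
    rw [hP]
    intro s hs
    simp [mix, Measure.add_apply, hs, hac₁ hs]
  have hacP : P₂ ≪ P := by
    rw [hP]
    intro s hs
    simp only [mix, Measure.coe_add, Pi.add_apply, Measure.coe_smul, Pi.smul_apply,
      smul_eq_mul, add_eq_zero, mul_eq_zero] at hs
    rcases hs.2 with h | h
    · exact absurd h (by simp [ENNReal.ofReal_eq_zero, not_le]; linarith)
    · exact h
  -- the P₂-integral equals -KL P₂ P
  have hneg : ∫ x, Real.log ((P.rnDeriv P₂ x).toReal) ∂P₂ = -KL P₂ P := by
    have h : (fun x => Real.log ((P.rnDeriv P₂ x).toReal))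
        =ᵐ[P₂] fun x => -Real.log ((P₂.rnDeriv P x).toReal) := by
      filter_upwards [Measure.inv_rnDeriv hacP] with x hx
      rw [← Real.log_inv, ← ENNReal.toReal_inv]
      congr 2
      rw [← hx]
      simp
    rw [integral_congr_ae h, integral_neg]
    rfl
  -- decompose the integral of llr over P
  have hdecomp : KL P P₂ = α * (∫ x, Real.log ((P.rnDeriv P₂ x).toReal) ∂P₁)
      + (1 - α) * (∫ x, Real.log ((P.rnDeriv P₂ x).toReal) ∂P₂) := by
    have : KL P P₂ = ∫ x, Real.log ((P.rnDeriv P₂ x).toReal) ∂(mix P₁ P₂ α) := by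
      rw [KL, hP]
    rw [this, mix, integral_add_measure, integral_smul_measure, integral_smul_measure,
      ENNReal.toReal_ofReal hα0.le, ENNReal.toReal_ofReal hα1'.le]
    · rfl
    · exact hInt₁.smul_measure ENNReal.ofReal_ne_top
    · exact hInt₂.smul_measure ENNReal.ofReal_ne_top
  have hkl2 : KL P₂ P = ∫ x, Real.log ((P₂.rnDeriv P x).toReal) ∂P₂ := rfl
  have hmain : (∫ x, Real.log ((P.rnDeriv P₂ x).toReal) ∂P₁)
      = (1 / α) * KL P P₂ + ((1 - α) / α) * KL P₂ P := by
    rw [hneg] at hdecomp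
    field_simp
    linarith [hdecomp]
  -- nonnegativity of the two KL divergences
  have hKLnn₁ : 0 ≤ KL P P₂ := KL_nonneg P P₂ hPac hacP hKL₁
  have hKLnn₂ : 0 ≤ KL P₂ P := KL_nonneg P₂ P hacP hPac hKL₂
  refine ⟨⟨hmain, ?_⟩, hneg, by rw [hP], by linarith⟩
  have h1 : 0 ≤ (1 / α) * KL P P₂ := by positivity
  have h2 : 0 ≤ ((1 - α) / α) * KL P₂ P := by positivity
  linarith
end

section
/- Assume w = log(dP_left/dP_right) is integrable with respect to both P₁ and P₂ and the relevant KL divergences are finite. Then the expected increments of the DR-CUSUM statistic satisfy E[w(X_t)] ≥ 0 for every t < T* and E[w(X_t)] ≤ 0 for every t ≥ T*; consequently, for every t ∈ {0,1,…,n}, E[S(t)] ≤ E[S(T*−1)], i.e. the expected DR-CUSUM statistic attains its maximum at the true change point, irrespective of the choice of the split point T_split. (Corollary 1 of the paper.) -/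
open MeasureTheory ProbabilityTheory

/-!
Both `P_left` and `P_right` are mixtures `mix P₁ P₂ a` and `mix P₁ P₂ b` with `0 ≤ b ≤ a ≤ 1`
(`P₁ = mix P₁ P₂ 1`, `P₂ = mix P₁ P₂ 0`). Write `u = E_{P₁}[w]`, `v = E_{P₂}[w]`. Gibbs'
inequality gives `E_{P_left}[w] ≥ 0 ≥ E_{P_right}[w]`, and by linearity of the integral in the
measure these read `a u + (1 - a) v ≥ 0 ≥ b u + (1 - b) v`. Subtracting, `(a - b)(u - v) ≥ 0`,
so `u ≥ v` and hence `u ≥ 0 ≥ v` (if `a = b` then `w = 0` a.e.). The expected increments of `S` therefore change sign from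
`≥ 0` to `≤ 0` at `T*`, and `E[S(t)]` is maximal at `t = T* - 1`.
-/

section Gibbs

variable {Ω : Type*} [MeasurableSpace Ω] {μ ν : Measure Ω}
  [IsProbabilityMeasure μ] [IsProbabilityMeasure ν]

lemma integral_llr_nonneg (hμν : μ ≪ ν) (h_int : Integrable (llr μ ν) μ) :
    0 ≤ ∫ x, llr μ ν x ∂μ := by
  simpa using InformationTheory.integral_llr_add_sub_measure_univ_nonneg hμν h_int

lemma integral_llr_nonpos (hνμ : ν ≪ μ) (h_int : Integrable (llr μ ν) ν) :
    ∫ x, llr μ ν x ∂ν ≤ 0 := by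
  have hneg : -llr μ ν =ᵐ[ν] llr ν μ := by simpa using (neg_llr hνμ).neg.symm
  have := integral_llr_nonneg hνμ (h_int.neg.congr hneg)
  rw [← integral_congr_ae hneg, integral_neg'] at this
  linarith

end Gibbs

section Mix

variable {Ω : Type*} [MeasurableSpace Ω] {P₁ P₂ : Measure Ω}

lemma mix_zero (P₁ P₂ : Measure Ω) : mix P₁ P₂ 0 = P₂ := by
  simp [mix]

lemma mix_one (P₁ P₂ : Measure Ω) : mix P₁ P₂ 1 = P₁ := by
  simp [mix]

lemma isProbabilityMeasure_mix [IsProbabilityMeasure P₁] [IsProbabilityMeasure P₂] {l : ℝ}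
    (h0 : 0 ≤ l) (h1 : l ≤ 1) : IsProbabilityMeasure (mix P₁ P₂ l) := by
  constructor
  simp [mix, ← ENNReal.ofReal_add h0 (sub_nonneg.2 h1)]

lemma integrable_mix {f : Ω → ℝ} (hf₁ : Integrable f P₁) (hf₂ : Integrable f P₂) (l : ℝ) :
    Integrable f (mix P₁ P₂ l) :=
  (hf₁.smul_measure ENNReal.ofReal_ne_top).add_measure (hf₂.smul_measure ENNReal.ofReal_ne_top)

lemma integral_mix {f : Ω → ℝ} (hf₁ : Integrable f P₁) (hf₂ : Integrable f P₂) {l : ℝ}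
    (h0 : 0 ≤ l) (h1 : l ≤ 1) :
    ∫ x, f x ∂(mix P₁ P₂ l) = l * ∫ x, f x ∂P₁ + (1 - l) * ∫ x, f x ∂P₂ := by
  rw [mix, integral_add_measure (hf₁.smul_measure ENNReal.ofReal_ne_top)
      (hf₂.smul_measure ENNReal.ofReal_ne_top), integral_smul_measure, integral_smul_measure,
    ENNReal.toReal_ofReal h0, ENNReal.toReal_ofReal (sub_nonneg.2 h1), smul_eq_mul, smul_eq_mul]

lemma mix_absolutelyContinuous (h : P₂ ≪ P₁) (l : ℝ) : mix P₁ P₂ l ≪ P₁ := by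
  intro s hs
  simp [mix, hs, h hs]

lemma absolutelyContinuous_mix (h : P₁ ≪ P₂) (l : ℝ) : P₁ ≪ mix P₁ P₂ l := by
  intro s hs
  simp only [mix, Measure.add_apply, Measure.smul_apply, smul_eq_mul, add_eq_zero, mul_eq_zero,
    ENNReal.ofReal_eq_zero] at hs
  rcases hs with ⟨hl | hs₁, h1l | hs₂⟩
  · linarith
  · exact h hs₂
  · exact hs₁
  · exact hs₁

theorem integral_llr_mix_nonneg_and_nonpos [IsProbabilityMeasure P₁] [IsProbabilityMeasure P₂]
    (hac₁ : P₁ ≪ P₂) (hac₂ : P₂ ≪ P₁) {a b : ℝ} (hb : 0 ≤ b) (hba : b ≤ a) (ha : a ≤ 1)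
    (hint₁ : Integrable (llr (mix P₁ P₂ a) (mix P₁ P₂ b)) P₁)
    (hint₂ : Integrable (llr (mix P₁ P₂ a) (mix P₁ P₂ b)) P₂) :
    0 ≤ ∫ x, llr (mix P₁ P₂ a) (mix P₁ P₂ b) x ∂P₁ ∧
      ∫ x, llr (mix P₁ P₂ a) (mix P₁ P₂ b) x ∂P₂ ≤ 0 := by
  have : IsProbabilityMeasure (mix P₁ P₂ a) := isProbabilityMeasure_mix (hb.trans hba) ha
  have : IsProbabilityMeasure (mix P₁ P₂ b) := isProbabilityMeasure_mix hb (hba.trans ha)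
  have hac : ∀ c d : ℝ, mix P₁ P₂ c ≪ mix P₁ P₂ d := fun c d =>
    (mix_absolutelyContinuous hac₂ c).trans (absolutelyContinuous_mix hac₁ d)
  rcases hba.eq_or_lt with rfl | hba
  · have hzero : llr (mix P₁ P₂ b) (mix P₁ P₂ b) =ᵐ[mix P₁ P₂ b] 0 := llr_self _
    have hzero₁ := absolutelyContinuous_mix hac₁ b |>.ae_le hzero
    have hzero₂ := (hac₂.trans (absolutelyContinuous_mix hac₁ b)).ae_le hzero
    simp [integral_congr_ae hzero₁, integral_congr_ae hzero₂]
  set u := ∫ x, llr (mix P₁ P₂ a) (mix P₁ P₂ b) x ∂P₁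
  set v := ∫ x, llr (mix P₁ P₂ a) (mix P₁ P₂ b) x ∂P₂
  have hleft : 0 ≤ a * u + (1 - a) * v := by
    rw [← integral_mix hint₁ hint₂ (hb.trans hba.le) ha]
    exact integral_llr_nonneg (hac a b) (integrable_mix hint₁ hint₂ a)
  have hright : b * u + (1 - b) * v ≤ 0 := by
    rw [← integral_mix hint₁ hint₂ hb (hba.le.trans ha)]
    exact integral_llr_nonpos (hac b a) (integrable_mix hint₁ hint₂ b)
  have huv : v ≤ u := by nlinarith
  constructor <;> nlinarith [mul_nonneg (sub_nonneg.2 ha) (sub_nonneg.2 huv),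
    mul_nonneg hb (sub_nonneg.2 huv)]

end Mix

lemma exists_mix_weights_of_split {Ω : Type*} [MeasurableSpace Ω] (P₁ P₂ : Measure Ω)
    {n Tstar : ℕ} (Tsplit : ℕ) (hT : Tstar ≤ n) :
    ∃ a b : ℝ, 0 ≤ b ∧ b ≤ a ∧ a ≤ 1 ∧
      (if Tsplit ≤ Tstar then P₁ else mix P₁ P₂ ((Tstar : ℝ) / (Tsplit : ℝ))) = mix P₁ P₂ a ∧
      (if Tsplit ≤ Tstar
        then mix P₁ P₂ (((Tstar : ℝ) - (Tsplit : ℝ)) / ((n : ℝ) - (Tsplit : ℝ))) else P₂)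
        = mix P₁ P₂ b := by
  by_cases hs : Tsplit ≤ Tstar
  · have hs' : (Tsplit : ℝ) ≤ Tstar := by exact_mod_cast hs
    have hT' : (Tstar : ℝ) ≤ n := by exact_mod_cast hT
    have hb1 : ((Tstar : ℝ) - Tsplit) / (n - Tsplit) ≤ 1 :=
      div_le_one_of_le₀ (by linarith) (by linarith)
    refine ⟨1, _, div_nonneg (by linarith) (by linarith), hb1, le_rfl, ?_, ?_⟩ <;>
      simp [hs, mix_one]
  · have hs' : (Tstar : ℝ) ≤ Tsplit := by exact_mod_cast (not_le.1 hs).le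
    refine ⟨_, 0, le_rfl, by positivity, div_le_one_of_le₀ hs' (by positivity), ?_, ?_⟩ <;>
      simp [hs, mix_zero]

lemma sum_Icc_le_sum_Icc_pred_of_sign_change {e : ℕ → ℝ} {n T t : ℕ}
    (hpre : ∀ j, 1 ≤ j → j < T → 0 ≤ e j) (hpost : ∀ j, T ≤ j → j ≤ n → e j ≤ 0) (ht : t ≤ n) :
    ∑ j ∈ Finset.Icc 1 t, e j ≤ ∑ j ∈ Finset.Icc 1 (T - 1), e j := by
  rcases le_total t (T - 1) with h | h
  · refine Finset.sum_le_sum_of_subset_of_nonneg (Finset.Icc_subset_Icc_right h) ?_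
    intro j hj _
    rw [Finset.mem_Icc] at hj
    exact hpre j hj.1 (by omega)
  · rw [← Finset.sum_sdiff (Finset.Icc_subset_Icc_right h)]
    refine add_le_of_nonpos_left (Finset.sum_nonpos fun j hj => ?_)
    simp only [Finset.mem_sdiff, Finset.mem_Icc] at hj
    exact hpost j (by omega) (by omega)

theorem stmt3_general {Ω Θ : Type*} [MeasurableSpace Ω] [MeasurableSpace Θ]
    (Pr : Measure Θ)
    (P₁ P₂ : Measure Ω) [IsProbabilityMeasure P₁] [IsProbabilityMeasure P₂]
    (hac₁ : P₁ ≪ P₂) (hac₂ : P₂ ≪ P₁)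
    (n Tstar Tsplit : ℕ) (hT₂ : Tstar ≤ n)
    (X : ℕ → Θ → Ω) (hXmeas : ∀ t, Measurable (X t))
    (hpre : ∀ t, 1 ≤ t → t < Tstar → Measure.map (X t) Pr = P₁)
    (hpost : ∀ t, Tstar ≤ t → t ≤ n → Measure.map (X t) Pr = P₂)
    (Pleft Pright : Measure Ω)
    (hPl : Pleft = if Tsplit ≤ Tstar then P₁
      else mix P₁ P₂ ((Tstar : ℝ) / (Tsplit : ℝ)))
    (hPr : Pright = if Tsplit ≤ Tstar
      then mix P₁ P₂ (((Tstar : ℝ) - (Tsplit : ℝ)) / ((n : ℝ) - (Tsplit : ℝ))) else P₂)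
    (w : Ω → ℝ) (hw : w = fun x => Real.log ((Pleft.rnDeriv Pright x).toReal))
    (hInt₁ : Integrable w P₁) (hInt₂ : Integrable w P₂)
    (S : ℕ → Θ → ℝ) (hS : ∀ t θ, S t θ = ∑ j ∈ Finset.Icc 1 t, w (X j θ)) :
    (∀ t, 1 ≤ t → t < Tstar → 0 ≤ ∫ θ, w (X t θ) ∂Pr) ∧
    (∀ t, Tstar ≤ t → t ≤ n → (∫ θ, w (X t θ) ∂Pr) ≤ 0) ∧
    (∀ t, t ≤ n → (∫ θ, S t θ ∂Pr) ≤ ∫ θ, S (Tstar - 1) θ ∂Pr) := by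
  obtain ⟨a, b, hb, hba, ha, hPl', hPr'⟩ := exists_mix_weights_of_split P₁ P₂ Tsplit hT₂
  have hw' : w = llr (mix P₁ P₂ a) (mix P₁ P₂ b) := by rw [hw, hPl, hPr, hPl', hPr']; rfl
  have hwm : Measurable w := hw' ▸ measurable_llr _ _
  obtain ⟨hP₁, hP₂⟩ := integral_llr_mix_nonneg_and_nonpos hac₁ hac₂ hb hba ha
    (hw' ▸ hInt₁) (hw' ▸ hInt₂)
  have hmean : ∀ t, ∫ θ, w (X t θ) ∂Pr = ∫ x, w x ∂(Pr.map (X t)) := fun t =>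
    (integral_map (hXmeas t).aemeasurable hwm.aestronglyMeasurable).symm
  have hint : ∀ t, 1 ≤ t → t ≤ n → Integrable (fun θ => w (X t θ)) Pr := fun t h1 h2 => by
    refine (integrable_map_measure hwm.aestronglyMeasurable (hXmeas t).aemeasurable).1 ?_
    rcases lt_or_ge t Tstar with h | h
    · rwa [hpre t h1 h]
    · rwa [hpost t h h2]
  have hinc_pre : ∀ t, 1 ≤ t → t < Tstar → 0 ≤ ∫ θ, w (X t θ) ∂Pr := fun t h1 h2 => by
    rw [hmean, hpre t h1 h2]; exact hw' ▸ hP₁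
  have hinc_post : ∀ t, Tstar ≤ t → t ≤ n → ∫ θ, w (X t θ) ∂Pr ≤ 0 := fun t h1 h2 => by
    rw [hmean, hpost t h1 h2]; exact hw' ▸ hP₂
  have hES : ∀ s ≤ n, ∫ θ, S s θ ∂Pr = ∑ j ∈ Finset.Icc 1 s, ∫ θ, w (X j θ) ∂Pr :=
    fun s hs => by
      simp only [hS]
      exact integral_finsetSum _ fun j hj =>
        hint j (Finset.mem_Icc.1 hj).1 ((Finset.mem_Icc.1 hj).2.trans hs)
  refine ⟨hinc_pre, hinc_post, fun t ht => ?_⟩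
  rw [hES t ht, hES _ (by omega)]
  exact sum_Icc_le_sum_Icc_pred_of_sign_change hinc_pre hinc_post ht

/-- Corollary 1 of the paper: the expected increments of the DR-CUSUM statistic are
nonnegative before the change point and nonpositive after it, and consequently the
expected DR-CUSUM statistic `E[S(t)]` attains its maximum at the true change point `T*`,
irrespective of the choice of the split point `T_split`. -/
theorem stmt3 {Ω Θ : Type*} [MeasurableSpace Ω] [MeasurableSpace Θ]
    (Pr : Measure Θ) [IsProbabilityMeasure Pr]
    (P₁ P₂ : Measure Ω) [IsProbabilityMeasure P₁] [IsProbabilityMeasure P₂]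
    (hac₁ : P₁ ≪ P₂) (hac₂ : P₂ ≪ P₁)
    (n Tstar Tsplit : ℕ) (hT₁ : 1 ≤ Tstar) (hT₂ : Tstar ≤ n)
    (hTs₁ : 1 ≤ Tsplit) (hTs₂ : Tsplit ≤ n)
    (X : ℕ → Θ → Ω) (hXmeas : ∀ t, Measurable (X t))
    (hInd : iIndepFun (m := fun _ : {k : ℕ // 1 ≤ k ∧ k ≤ n} => ‹MeasurableSpace Ω›)
      (fun k : {k : ℕ // 1 ≤ k ∧ k ≤ n} => X k.1) Pr)
    (hpre : ∀ t, 1 ≤ t → t < Tstar → Measure.map (X t) Pr = P₁)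
    (hpost : ∀ t, Tstar ≤ t → t ≤ n → Measure.map (X t) Pr = P₂)
    (Pleft Pright : Measure Ω)
    (hPl : Pleft = if Tsplit ≤ Tstar then P₁
      else mix P₁ P₂ ((Tstar : ℝ) / (Tsplit : ℝ)))
    (hPr : Pright = if Tsplit ≤ Tstar
      then mix P₁ P₂ (((Tstar : ℝ) - (Tsplit : ℝ)) / ((n : ℝ) - (Tsplit : ℝ))) else P₂)
    (w : Ω → ℝ) (hw : w = fun x => Real.log ((Pleft.rnDeriv Pright x).toReal))
    (hInt₁ : Integrable w P₁) (hInt₂ : Integrable w P₂)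
    (hKL₁ : Integrable (fun x => Real.log ((Pleft.rnDeriv Pright x).toReal)) Pleft)
    (hKL₂ : Integrable (fun x => Real.log ((Pright.rnDeriv Pleft x).toReal)) Pright)
    (S : ℕ → Θ → ℝ) (hS : ∀ t θ, S t θ = ∑ j ∈ Finset.Icc 1 t, w (X j θ)) :
    (∀ t, 1 ≤ t → t < Tstar → 0 ≤ ∫ θ, w (X t θ) ∂Pr) ∧
    (∀ t, Tstar ≤ t → t ≤ n → (∫ θ, w (X t θ) ∂Pr) ≤ 0) ∧
    (∀ t, t ≤ n → (∫ θ, S t θ ∂Pr) ≤ ∫ θ, S (Tstar - 1) θ ∂Pr) :=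
  stmt3_general Pr P₁ P₂ hac₁ hac₂ n Tstar Tsplit hT₂ X hXmeas hpre hpost Pleft Pright hPl hPr w hw
    hInt₁ hInt₂ S hS
end

section
/- Let u₁, …, u_m be independent, identically distributed real random variables with mean zero whose values lie almost surely in an interval of length L > 0, and let S_k = Σ_{i=1}^{k} u_i for k ∈ {1,…,m}. Then for all λ₁, λ₂ > 0 with 2·exp(−2λ₂²/(m·L²)) < 1, P( max_{k ∈ {1,…,m}} |S_k| > λ₁ + λ₂ ) ≤ 2·exp(−2λ₁²/(m·L²)) / (1 − 2·exp(−2λ₂²/(m·L²))). -/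
/-!
Split the event `max_k |S_k| > l₁ + l₂` according to the first index `k` at which `|S_k|`
exceeds `l₁ + l₂`. That first-passage event is a function of `S_1, …, S_k`, hence independent
of `S_m - S_k`, and together with `|S_m - S_k| ≤ l₂` it forces `|S_m| > l₁`. Summing over `k`
gives Ottaviani's inequality
`P(max_k |S_k| > l₁ + l₂) · min_k P(|S_m - S_k| ≤ l₂) ≤ P(|S_m| > l₁)`.
Both remaining probabilities are bounded by Hoeffding's inequality: by Hoeffding's lemma each
`u_i` is sub-Gaussian with variance proxy `L²/4`, so a sum of at most `m` of them has variance
proxy at most `m L²/4`.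
-/

open MeasureTheory ProbabilityTheory Real
open scoped NNReal

namespace ProbabilityTheory

variable {Ω : Type*} [MeasurableSpace Ω] {μ : Measure Ω}

lemma iIndepFun.indepFun_of_measurable_iSup {ι β γ δ : Type*} [mβ : MeasurableSpace β]
    [MeasurableSpace γ] [MeasurableSpace δ] {X : ι → Ω → β} (hX : ∀ i, Measurable (X i))
    (h : iIndepFun X μ) {s t : Set ι} (hst : Disjoint s t) {f : Ω → γ} {g : Ω → δ}
    (hf : Measurable[⨆ i ∈ s, mβ.comap (X i)] f)
    (hg : Measurable[⨆ i ∈ t, mβ.comap (X i)] g) :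
    IndepFun f g μ := by
  rw [IndepFun_iff_Indep]
  exact indep_of_indep_of_le_right (indep_of_indep_of_le_left
    (indep_iSup_of_disjoint (fun i => (hX i).comap_le) h.iIndep hst) hf.comap_le) hg.comap_le

variable {X : Ω → ℝ} {c c' : ℝ≥0}

lemma HasSubgaussianMGF.mono (h : HasSubgaussianMGF X c μ) (hcc' : c ≤ c') :
    HasSubgaussianMGF X c' μ where
  integrable_exp_mul := h.integrable_exp_mul
  mgf_le t := (h.mgf_le t).trans <| by gcongr

lemma HasSubgaussianMGF.measureReal_lt_abs_le [IsFiniteMeasure μ]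
    (h : HasSubgaussianMGF X c μ) {ε : ℝ} (hε : 0 ≤ ε) :
    μ.real {ω | ε < |X ω|} ≤ 2 * exp (-ε ^ 2 / (2 * c)) := by
  have hsub : {ω | ε < |X ω|} ⊆ {ω | ε ≤ X ω} ∪ {ω | ε ≤ (-X) ω} :=
    fun ω (hω : ε < |X ω|) => (lt_abs.mp hω).imp le_of_lt le_of_lt
  calc μ.real {ω | ε < |X ω|}
      ≤ μ.real {ω | ε ≤ X ω} + μ.real {ω | ε ≤ (-X) ω} :=
        (measureReal_mono hsub).trans (measureReal_union_le _ _)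
    _ ≤ exp (-ε ^ 2 / (2 * c)) + exp (-ε ^ 2 / (2 * c)) :=
        add_le_add (h.measure_ge_le hε) (h.neg.measure_ge_le hε)
    _ = 2 * exp (-ε ^ 2 / (2 * c)) := by ring

end ProbabilityTheory

section Ottaviani

variable {Ω : Type*} {S : ℕ → Ω → ℝ} {l l₁ l₂ B : ℝ} {k m : ℕ}

def firstPassage (S : ℕ → Ω → ℝ) (l : ℝ) (k : ℕ) : Set Ω :=
  {ω | l < |S k ω| ∧ ∀ j ∈ Finset.Ico 1 k, |S j ω| ≤ l}

lemma pairwiseDisjoint_firstPassage (S : ℕ → Ω → ℝ) (l : ℝ) (m : ℕ) :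
    (Finset.Icc 1 m : Set ℕ).PairwiseDisjoint (firstPassage S l) := by
  have key : ∀ i j, 1 ≤ i → i < j → Disjoint (firstPassage S l i) (firstPassage S l j) :=
    fun i j hi hij => Set.disjoint_left.mpr fun ω hωi hωj =>
      (hωj.2 i (Finset.mem_Ico.mpr ⟨hi, hij⟩)).not_gt hωi.1
  intro i hi j hj hij
  rcases hij.lt_or_gt with h | h
  · exact key i j (Finset.mem_Icc.mp hi).1 h
  · exact (key j i (Finset.mem_Icc.mp hj).1 h).symm

lemma setOf_exists_lt_abs_eq_biUnion_firstPassage (S : ℕ → Ω → ℝ) (l : ℝ) (m : ℕ) :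
    {ω | ∃ k ∈ Finset.Icc 1 m, l < |S k ω|} = ⋃ k ∈ Finset.Icc 1 m, firstPassage S l k := by
  classical
  ext ω
  simp only [Set.mem_ofPred_eq, Set.mem_iUnion, exists_prop]
  constructor
  · rintro ⟨k, hk, hlk⟩
    have hex : ∃ n, 1 ≤ n ∧ l < |S n ω| := ⟨k, (Finset.mem_Icc.mp hk).1, hlk⟩
    obtain ⟨h1, hl⟩ := Nat.find_spec hex
    refine ⟨Nat.find hex, Finset.mem_Icc.mpr ⟨h1, ?_⟩, hl, fun j hj => ?_⟩
    · obtain ⟨h1k, hkm⟩ := Finset.mem_Icc.mp hk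
      exact (Nat.find_min' hex ⟨h1k, hlk⟩).trans hkm
    · obtain ⟨hj1, hjk⟩ := Finset.mem_Ico.mp hj
      exact not_lt.mp fun h => Nat.find_min hex hjk ⟨hj1, h⟩
  · rintro ⟨k, hk, hlk, -⟩
    exact ⟨k, hk, hlk⟩

lemma firstPassage_inter_subset (k m : ℕ) :
    firstPassage S (l₁ + l₂) k ∩ {ω | |S m ω - S k ω| ≤ l₂} ⊆ {ω | l₁ < |S m ω|} :=
  fun ω ⟨hA, (hC : |S m ω - S k ω| ≤ l₂)⟩ => show l₁ < |S m ω| by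
    linarith [hA.1, abs_sub_abs_le_abs_sub (S k ω) (S m ω), abs_sub_comm (S k ω) (S m ω)]

def pastVector (S : ℕ → Ω → ℝ) (k : ℕ) (ω : Ω) (j : Finset.Icc 1 k) : ℝ := S j ω

lemma firstPassage_eq_preimage_pastVector (hk : 1 ≤ k) :
    firstPassage S l k = pastVector S k ⁻¹' {v | l < |v ⟨k, Finset.mem_Icc.mpr ⟨hk, le_rfl⟩⟩| ∧
      ∀ j : Finset.Icc 1 k, j.1 < k → |v j| ≤ l} := by
  ext ω
  simp only [firstPassage, pastVector, Set.mem_ofPred_eq, Set.mem_preimage, Finset.mem_Ico,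
    Subtype.forall, Finset.mem_Icc]
  exact and_congr_right fun _ =>
    ⟨fun h j hj hjk => h j ⟨hj.1, hjk⟩, fun h j hj => h j ⟨hj.1, hj.2.le⟩ hj.2⟩

variable [MeasurableSpace Ω] {μ : Measure Ω}

lemma ProbabilityTheory.IndepFun.measureReal_firstPassage_inter {β : Type*}
    [MeasurableSpace β] {g : Ω → β} (hind : IndepFun (pastVector S k) g μ) (hk : 1 ≤ k) {t : Set β}
    (ht : MeasurableSet t) :
    μ.real (firstPassage S l k ∩ g ⁻¹' t) = μ.real (firstPassage S l k) * μ.real (g ⁻¹' t) := by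
  rw [firstPassage_eq_preimage_pastVector hk, measureReal_def, measureReal_def, measureReal_def,
    hind.measure_inter_preimage_eq_mul _ _ (by measurability) ht, ENNReal.toReal_mul]

theorem measureReal_exists_lt_abs_mul_le [IsProbabilityMeasure μ] (hS : ∀ k, Measurable (S k))
    (hindep : ∀ k ∈ Finset.Icc 1 m, IndepFun (pastVector S k) (fun ω => S m ω - S k ω) μ)
    (hB : ∀ k ∈ Finset.Icc 1 m, μ.real {ω | l₂ < |S m ω - S k ω|} ≤ B) :
    μ.real {ω | ∃ k ∈ Finset.Icc 1 m, l₁ + l₂ < |S k ω|} * (1 - B) ≤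
      μ.real {ω | l₁ < |S m ω|} := by
  set A := firstPassage S (l₁ + l₂)
  set C : ℕ → Set Ω := fun k => {ω | |S m ω - S k ω| ≤ l₂}
  have hA : ∀ k, MeasurableSet (A k) := fun k => by unfold A firstPassage; measurability
  have hC : ∀ k, MeasurableSet (C k) := fun k => by unfold C; measurability
  have hBC : ∀ k ∈ Finset.Icc 1 m, 1 - B ≤ μ.real (C k) := fun k hk => by
    have hcompl : (C k)ᶜ = {ω | l₂ < |S m ω - S k ω|} := by ext; simp [C]
    linarith [probReal_compl_eq_one_sub (μ := μ) (hC k), hcompl ▸ hB k hk]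
  calc μ.real {ω | ∃ k ∈ Finset.Icc 1 m, l₁ + l₂ < |S k ω|} * (1 - B)
      = ∑ k ∈ Finset.Icc 1 m, μ.real (A k) * (1 - B) := by
        rw [setOf_exists_lt_abs_eq_biUnion_firstPassage, measureReal_biUnion_finset
          (pairwiseDisjoint_firstPassage S _ m) fun k _ => hA k, Finset.sum_mul]
    _ ≤ ∑ k ∈ Finset.Icc 1 m, μ.real (A k) * μ.real (C k) :=
        Finset.sum_le_sum fun k hk => mul_le_mul_of_nonneg_left (hBC k hk) measureReal_nonneg
    _ = ∑ k ∈ Finset.Icc 1 m, μ.real (A k ∩ C k) :=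
        Finset.sum_congr rfl fun k hk =>
          ((hindep k hk).measureReal_firstPassage_inter (Finset.mem_Icc.mp hk).1
            (measurableSet_le measurable_abs measurable_const)).symm
    _ = μ.real (⋃ k ∈ Finset.Icc 1 m, A k ∩ C k) :=
        (measureReal_biUnion_finset ((pairwiseDisjoint_firstPassage S _ m).mono
          fun _ => Set.inter_subset_left) fun k _ => (hA k).inter (hC k)).symm
    _ ≤ μ.real {ω | l₁ < |S m ω|} :=
        measureReal_mono (Set.iUnion₂_subset fun k _ => firstPassage_inter_subset k m)

end Ottaviani

section PartialSums

variable {Ω : Type*} [MeasurableSpace Ω] {μ : Measure Ω} {u : ℕ → Ω → ℝ} {k m : ℕ}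

lemma sum_Icc_one_sub_sum_Icc_one {M : Type*} [AddCommGroup M] (f : ℕ → M) (hkm : k ≤ m) :
    ∑ i ∈ Finset.Icc 1 m, f i - ∑ i ∈ Finset.Icc 1 k, f i = ∑ i ∈ Finset.Ioc k m, f i := by
  have hIcc (n : ℕ) : Finset.Icc 1 n = Finset.Ioc 0 n := Finset.Icc_add_one_left_eq_Ioc 0 n
  rw [sub_eq_iff_eq_add', hIcc, hIcc, Finset.sum_Ioc_consecutive f k.zero_le hkm]

lemma indepFun_pastVector_sum_Ioc (hmeas : ∀ i, Measurable (u i))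
    (hInd : iIndepFun (fun i : {i : ℕ // 1 ≤ i ∧ i ≤ m} => u i.1) μ) (hkm : k ≤ m) :
    IndepFun (pastVector (fun n ω => ∑ i ∈ Finset.Icc 1 n, u i ω) k)
      (fun ω => ∑ i ∈ Finset.Ioc k m, u i ω) μ := by
  set past : Set {i : ℕ // 1 ≤ i ∧ i ≤ m} := {i | i.1 ≤ k}
  set future : Set {i : ℕ // 1 ≤ i ∧ i ≤ m} := {i | k < i.1}
  have measurable_u {s : Set {i : ℕ // 1 ≤ i ∧ i ≤ m}} {i : ℕ} (hi : 1 ≤ i ∧ i ≤ m)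
      (his : ⟨i, hi⟩ ∈ s) :
      Measurable[⨆ j ∈ s, MeasurableSpace.comap (u j.1) inferInstance] (u i) :=
    (comap_measurable (u i)).mono (le_iSup₂
      (f := fun (j : {i : ℕ // 1 ≤ i ∧ i ≤ m}) _ => MeasurableSpace.comap (u j.1) inferInstance)
      ⟨i, hi⟩ his) le_rfl
  refine hInd.indepFun_of_measurable_iSup (fun i => hmeas i.1) (s := past) (t := future)
    (Set.disjoint_left.mpr fun i (h1 : i.1 ≤ k) (h2 : k < i.1) => (not_lt.mpr h1) h2) ?_ ?_
  · refine @measurable_pi_lambda _ _ _ (_) _ _ fun j =>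
      Finset.measurable_sum _ fun i hi => ?_
    obtain ⟨h1, hij⟩ := Finset.mem_Icc.mp hi
    have hjk := (Finset.mem_Icc.mp j.2).2
    exact measurable_u ⟨h1, by omega⟩ (show i ≤ k by omega)
  · refine Finset.measurable_sum _ fun i hi => ?_
    obtain ⟨hki, him⟩ := Finset.mem_Ioc.mp hi
    exact measurable_u ⟨by omega, him⟩ hki

lemma hasSubgaussianMGF_sum_of_subset_Icc
    (hInd : iIndepFun (fun i : {i : ℕ // 1 ≤ i ∧ i ≤ m} => u i.1) μ) {c : ℝ≥0} {s : Finset ℕ}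
    (hs : s ⊆ Finset.Icc 1 m) (h : ∀ i ∈ s, HasSubgaussianMGF (u i) c μ) :
    HasSubgaussianMGF (fun ω => ∑ i ∈ s, u i ω) (s.card * c) μ := by
  have hmem : ∀ i ∈ s, 1 ≤ i ∧ i ≤ m := fun i hi => Finset.mem_Icc.mp (hs hi)
  have := HasSubgaussianMGF.sum_of_iIndepFun hInd (c := fun _ => c)
    (s := s.subtype fun i => 1 ≤ i ∧ i ≤ m) fun i hi => h i.1 (Finset.mem_subtype.mp hi)
  rw [Finset.sum_const, Finset.card_subtype, Finset.filter_true_of_mem hmem, nsmul_eq_mul] at this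
  exact this.congr (ae_of_all _ fun ω => Finset.sum_subtype_of_mem (fun i => u i ω) hmem)

lemma measureReal_lt_abs_sum_le [IsProbabilityMeasure μ] (hmeas : ∀ i, Measurable (u i))
    (hInd : iIndepFun (fun i : {i : ℕ // 1 ≤ i ∧ i ≤ m} => u i.1) μ)
    (hmean : ∀ i ∈ Finset.Icc 1 m, ∫ ω, u i ω ∂μ = 0) {a L : ℝ}
    (hbound : ∀ i ∈ Finset.Icc 1 m, ∀ᵐ ω ∂μ, u i ω ∈ Set.Icc a (a + L))
    {s : Finset ℕ} (hs : s ⊆ Finset.Icc 1 m) {ε : ℝ} (hε : 0 ≤ ε) :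
    μ.real {ω | ε < |∑ i ∈ s, u i ω|} ≤ 2 * exp (-2 * ε ^ 2 / (m * L ^ 2)) := by
  set c : ℝ≥0 := (‖a + L - a‖₊ / 2) ^ 2
  have hsum : HasSubgaussianMGF (fun ω => ∑ i ∈ s, u i ω) (m * c) μ := by
    refine (hasSubgaussianMGF_sum_of_subset_Icc hInd (c := c) hs fun i hi => ?_).mono ?_
    · exact hasSubgaussianMGF_of_mem_Icc_of_integral_eq_zero (hmeas i).aemeasurable
        (hbound i (hs hi)) (hmean i (hs hi))
    · gcongr
      simpa using Finset.card_le_card hs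
  have hc : ((m * c : ℝ≥0) : ℝ) = m * L ^ 2 / 4 := by
    simp only [c, NNReal.coe_mul, NNReal.coe_natCast, NNReal.coe_pow, NNReal.coe_div,
      NNReal.coe_ofNat, coe_nnnorm, add_sub_cancel_left, norm_eq_abs, div_pow, sq_abs]
    ring
  calc μ.real {ω | ε < |∑ i ∈ s, u i ω|} ≤ 2 * exp (-ε ^ 2 / (2 * (m * c : ℝ≥0))) :=
        hsum.measureReal_lt_abs_le hε
    _ = 2 * exp (-2 * ε ^ 2 / (m * L ^ 2)) := by
        rw [hc]
        ring_nf

end PartialSums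

theorem stmt7_general {Θ : Type*} [MeasurableSpace Θ] (Pr : Measure Θ) [IsProbabilityMeasure Pr]
    (m : ℕ) (u : ℕ → Θ → ℝ) (hmeas : ∀ i, Measurable (u i))
    (hInd : iIndepFun
      (fun k : {k : ℕ // 1 ≤ k ∧ k ≤ m} => u k.1) Pr)
    (hmean : ∀ i ∈ Finset.Icc 1 m, (∫ θ, u i θ ∂Pr) = 0)
    (L : ℝ) (a : ℝ)
    (hbound : ∀ i ∈ Finset.Icc 1 m, ∀ᵐ θ ∂Pr, u i θ ∈ Set.Icc a (a + L))
    (S : ℕ → Θ → ℝ) (hS : ∀ k θ, S k θ = ∑ i ∈ Finset.Icc 1 k, u i θ) :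
    ∀ l₁ l₂ : ℝ, 0 < l₁ → 0 < l₂ →
      2 * Real.exp (-2 * l₂ ^ 2 / (m * L ^ 2)) < 1 →
      Pr {θ | ∃ k ∈ Finset.Icc 1 m, l₁ + l₂ < |S k θ|}
        ≤ ENNReal.ofReal (2 * Real.exp (-2 * l₁ ^ 2 / (m * L ^ 2))
            / (1 - 2 * Real.exp (-2 * l₂ ^ 2 / (m * L ^ 2)))) := by
  intro l₁ l₂ hl₁ hl₂ hB
  obtain rfl : S = fun k θ => ∑ i ∈ Finset.Icc 1 k, u i θ := funext₂ hS
  have hIoc : ∀ k, Finset.Ioc k m ⊆ Finset.Icc 1 m := fun k i hi => by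
    simp only [Finset.mem_Ioc, Finset.mem_Icc] at hi ⊢; omega
  have hottaviani := measureReal_exists_lt_abs_mul_le (μ := Pr) (l₁ := l₁)
    (fun k => Finset.measurable_sum _ fun i _ => hmeas i)
    (fun k hk => by
      have := indepFun_pastVector_sum_Ioc hmeas hInd (Finset.mem_Icc.mp hk).2
      simpa only [← sum_Icc_one_sub_sum_Icc_one _ (Finset.mem_Icc.mp hk).2] using this)
    (fun k hk => by
      have := measureReal_lt_abs_sum_le hmeas hInd hmean hbound (hIoc k) hl₂.le
      simpa only [← sum_Icc_one_sub_sum_Icc_one _ (Finset.mem_Icc.mp hk).2] using this)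
  have hhoeffding := measureReal_lt_abs_sum_le hmeas hInd hmean hbound subset_rfl hl₁.le
  rw [← ofReal_measureReal]
  exact ENNReal.ofReal_le_ofReal ((le_div_iff₀ (by linarith)).mpr (hottaviani.trans hhoeffding))

/-- Ottaviani's maximal inequality combined with Hoeffding's inequality: for i.i.d.
mean-zero random variables `u₁, …, u_m` taking values a.s. in an interval of length `L`,
with partial sums `S_k = Σ_{i=1}^k u_i`, for all `λ₁, λ₂ > 0` with
`2·exp(-2λ₂²/(m·L²)) < 1`,
`P(max_{k ≤ m} |S_k| > λ₁ + λ₂) ≤ 2·exp(-2λ₁²/(m·L²)) / (1 - 2·exp(-2λ₂²/(m·L²)))`. -/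
theorem stmt7 {Θ : Type*} [MeasurableSpace Θ] (Pr : Measure Θ) [IsProbabilityMeasure Pr]
    (m : ℕ) (hm : 1 ≤ m) (u : ℕ → Θ → ℝ) (hmeas : ∀ i, Measurable (u i))
    (hInd : iIndepFun
      (fun k : {k : ℕ // 1 ≤ k ∧ k ≤ m} => u k.1) Pr)
    (hid : ∀ i ∈ Finset.Icc 1 m, ∀ j ∈ Finset.Icc 1 m, IdentDistrib (u i) (u j) Pr Pr)
    (hmean : ∀ i ∈ Finset.Icc 1 m, (∫ θ, u i θ ∂Pr) = 0)
    (L : ℝ) (hL : 0 < L) (a : ℝ)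
    (hbound : ∀ i ∈ Finset.Icc 1 m, ∀ᵐ θ ∂Pr, u i θ ∈ Set.Icc a (a + L))
    (S : ℕ → Θ → ℝ) (hS : ∀ k θ, S k θ = ∑ i ∈ Finset.Icc 1 k, u i θ) :
    ∀ l₁ l₂ : ℝ, 0 < l₁ → 0 < l₂ →
      2 * Real.exp (-2 * l₂ ^ 2 / (m * L ^ 2)) < 1 →
      Pr {θ | ∃ k ∈ Finset.Icc 1 m, l₁ + l₂ < |S k θ|}
        ≤ ENNReal.ofReal (2 * Real.exp (-2 * l₁ ^ 2 / (m * L ^ 2))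
            / (1 - 2 * Real.exp (-2 * l₂ ^ 2 / (m * L ^ 2)))) :=
  stmt7_general Pr m u hmeas hInd hmean L a hbound S hS
end

section
/- Let Y₁, Y₂, …, Y_N be independent, identically distributed real random variables with E[Y_j] = K > 0 and |Y_j| ≤ A almost surely for a constant A > 0, and let S_k = Σ_{j=1}^{k} Y_j. Let α > 0 be such that exp(−α·K²/(2A²)) < 1/4 and α ≤ N. Then the probability that some partial sum of length at least α is nonpositive is exponentially small: P( ∃ k ∈ {⌈α⌉, …, N} with S_k ≤ 0 ) ≤ (16/3)·exp(−α·K²/(2A²)). -/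
/-!
With `λ = K / A²`, the products `Mₙ = ∏_{j ≤ n} e^{-λ Y_j} / E[e^{-λ Y_j}]` form a nonnegative
martingale of mean one, by independence. Hoeffding's lemma gives `E[e^{-λ Y_j}] ≤ r` with
`r = e^{-K²/(2A²)} ≤ 1`, so on the event `S_k ≤ 0` with `k ≥ ⌈α⌉` we get `M_k ≥ r^{-k} ≥ r^{-⌈α⌉}`.
Doob's maximal inequality then bounds the probability of the event by `r^{⌈α⌉} ≤ e^{-αK²/(2A²)}`.
-/

open MeasureTheory ProbabilityTheory Real

namespace ProbabilityTheory

variable {Ω : Type*} [mΩ : MeasurableSpace Ω] {μ : Measure Ω}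

lemma mgf_le_exp_of_abs_le [IsProbabilityMeasure μ] {X : Ω → ℝ} {A : ℝ}
    (hX : AEMeasurable X μ) (hb : ∀ᵐ ω ∂μ, |X ω| ≤ A) (t : ℝ) :
    mgf X μ t ≤ exp (t * μ[X] + A ^ 2 * t ^ 2 / 2) := by
  have hsub := hasSubgaussianMGF_of_mem_Icc hX (a := -A) (b := A)
    (hb.mono fun ω h => abs_le.mp h)
  calc mgf X μ t = mgf (fun ω => X ω - μ[X]) μ t * exp (t * μ[X]) := by
        rw [← mgf_add_const]; simp
    _ ≤ exp (((‖A - -A‖₊ / 2) ^ 2 : NNReal) * t ^ 2 / 2) * exp (t * μ[X]) := by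
        gcongr; exact hsub.mgf_le t
    _ = exp (t * μ[X] + A ^ 2 * t ^ 2 / 2) := by
        have hsq : (|A + A| / 2) ^ 2 = A ^ 2 := by
          rw [← two_mul, abs_mul, abs_two, mul_div_cancel_left₀ _ two_ne_zero, sq_abs]
        rw [← exp_add]
        simp only [NNReal.coe_pow, NNReal.coe_div, coe_nnnorm, Real.norm_eq_abs, sub_neg_eq_add,
          NNReal.coe_ofNat, hsq]
        rw [add_comm]

section ExpMartingale

variable {X : ℕ → Ω → ℝ} {N : ℕ}

variable (N) in
def natFiltration (hX : ∀ j, Measurable (X j)) : Filtration ℕ mΩ where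
  seq n := ⨆ i ∈ {i : {k : ℕ // 1 ≤ k ∧ k ≤ N} | i.1 ≤ n},
    MeasurableSpace.comap (X i.1) inferInstance
  mono' _ _ hnm := biSup_mono fun _ hi => le_trans hi hnm
  le' _ := iSup₂_le fun i _ => (hX i.1).comap_le

lemma measurable_natFiltration (hX : ∀ j, Measurable (X j)) {j n : ℕ} (hj : 1 ≤ j) (hjn : j ≤ n)
    (hjN : j ≤ N) :
    Measurable[natFiltration N hX n] (X j) :=
  Measurable.of_comap_le (le_iSup₂_of_le (⟨j, hj, hjN⟩ : {k : ℕ // 1 ≤ k ∧ k ≤ N}) hjn le_rfl)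

lemma indep_comap_natFiltration (hX : ∀ j, Measurable (X j))
    (hind : iIndepFun (fun k : {k : ℕ // 1 ≤ k ∧ k ≤ N} => X k.1) μ) {n : ℕ} (hn : n < N) :
    Indep (MeasurableSpace.comap (X (n + 1)) inferInstance) (natFiltration N hX n) μ := by
  have h := indep_iSup_of_disjoint (fun i : {k : ℕ // 1 ≤ k ∧ k ≤ N} => (hX i.1).comap_le)
    ((iIndepFun_iff_iIndep _ _ _).mp hind)
    (S := {⟨n + 1, by omega, hn⟩}) (T := {i | i.1 ≤ n})
    (Set.disjoint_singleton_left.mpr fun h => by simp at h)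
  simp only [Set.mem_singleton_iff, iSup_iSup_eq_left] at h
  exact h

variable (μ X N) in
noncomputable def expMartingale (t : ℝ) (n : ℕ) (ω : Ω) : ℝ :=
  ∏ j ∈ Finset.Icc 1 (min n N), exp (t * X j ω) / mgf (X j) μ t

lemma expMartingale_zero (t : ℝ) : expMartingale μ X N t 0 = 1 := by
  ext ω; simp [expMartingale]

lemma expMartingale_succ_of_lt (t : ℝ) {n : ℕ} (hn : n < N) :
    expMartingale μ X N t (n + 1)
      = expMartingale μ X N t n * fun ω => exp (t * X (n + 1) ω) / mgf (X (n + 1)) μ t := by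
  ext ω
  simp only [expMartingale, Pi.mul_apply, min_eq_left hn.le, min_eq_left (Nat.succ_le_of_lt hn)]
  exact Finset.prod_Icc_succ_top (Nat.le_add_left 1 n) _

lemma expMartingale_succ_of_le (t : ℝ) {n : ℕ} (hn : N ≤ n) :
    expMartingale μ X N t (n + 1) = expMartingale μ X N t n := by
  ext ω
  simp only [expMartingale, min_eq_right hn, min_eq_right (hn.trans n.le_succ)]

lemma stronglyAdapted_expMartingale (hX : ∀ j, Measurable (X j)) (t : ℝ) :
    StronglyAdapted (natFiltration N hX) (expMartingale μ X N t) := by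
  intro n
  refine (Finset.measurable_prod _ fun j hj => ?_).stronglyMeasurable
  obtain ⟨hj1, hjn⟩ := Finset.mem_Icc.mp hj
  exact ((measurable_natFiltration hX hj1 (hjn.trans (min_le_left _ _))
    (hjn.trans (min_le_right _ _))).const_mul t).exp.div_const _

lemma indepFun_expMartingale (hX : ∀ j, Measurable (X j))
    (hind : iIndepFun (fun k : {k : ℕ // 1 ≤ k ∧ k ≤ N} => X k.1) μ)
    (t : ℝ) {n : ℕ} (hn : n < N) :
    IndepFun (expMartingale μ X N t n)
      (fun ω => exp (t * X (n + 1) ω) / mgf (X (n + 1)) μ t) μ := by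
  have hZ : Measurable[MeasurableSpace.comap (X (n + 1)) inferInstance]
      (fun ω => exp (t * X (n + 1) ω) / mgf (X (n + 1)) μ t) :=
    (measurable_id.const_mul t).exp.div_const _ |>.comp (comap_measurable (X (n + 1)))
  rw [IndepFun_iff_Indep]
  exact indep_of_indep_of_le_right (indep_of_indep_of_le_left
    (indep_comap_natFiltration hX hind hn).symm
    ((stronglyAdapted_expMartingale hX t n).measurable.comap_le)) hZ.comap_le

lemma expMartingale_nonneg (t : ℝ) (n : ℕ) (ω : Ω) : 0 ≤ expMartingale μ X N t n ω :=
  Finset.prod_nonneg fun _ _ => div_nonneg (exp_pos _).le mgf_nonneg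

variable [IsProbabilityMeasure μ]

lemma integrable_expMartingale (hX : ∀ j, Measurable (X j))
    (hind : iIndepFun (fun k : {k : ℕ // 1 ≤ k ∧ k ≤ N} => X k.1) μ) {t : ℝ}
    (hint : ∀ j, 1 ≤ j → j ≤ N → Integrable (fun ω => exp (t * X j ω)) μ) (n : ℕ) :
    Integrable (expMartingale μ X N t n) μ := by
  induction n with
  | zero => rw [expMartingale_zero]; exact integrable_const 1
  | succ n ih =>
    rcases lt_or_ge n N with hn | hn
    · rw [expMartingale_succ_of_lt t hn]
      exact (indepFun_expMartingale hX hind t hn).integrable_mul ih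
        ((hint (n + 1) (Nat.le_add_left 1 n) hn).div_const _)
    · rwa [expMartingale_succ_of_le t hn]

lemma martingale_expMartingale (hX : ∀ j, Measurable (X j))
    (hind : iIndepFun (fun k : {k : ℕ // 1 ≤ k ∧ k ≤ N} => X k.1) μ) {t : ℝ}
    (hint : ∀ j, 1 ≤ j → j ≤ N → Integrable (fun ω => exp (t * X j ω)) μ) :
    Martingale (expMartingale μ X N t) (natFiltration N hX) μ := by
  refine martingale_nat (stronglyAdapted_expMartingale hX t)
    (integrable_expMartingale hX hind hint) fun n => ?_
  rcases lt_or_ge n N with hn | hn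
  · set Z := fun ω => exp (t * X (n + 1) ω) / mgf (X (n + 1)) μ t
    have hZint : Integrable Z μ := (hint (n + 1) (Nat.le_add_left 1 n) hn).div_const _
    have hZ : ∫ ω, Z ω ∂μ = 1 := by
      rw [integral_div]
      exact div_self (mgf_pos (hint (n + 1) (Nat.le_add_left 1 n) hn)).ne'
    have hMZ := integrable_expMartingale hX hind hint (n + 1)
    rw [expMartingale_succ_of_lt t hn] at hMZ ⊢
    have hcond : μ[Z | natFiltration N hX n] =ᵐ[μ] fun _ => 1 := by
      rw [← hZ]
      exact condExp_indep_eq (hX (n + 1)).comap_le ((natFiltration N hX).le n)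
        ((measurable_id.const_mul t).exp.div_const _ |>.comp
          (comap_measurable (X (n + 1)))).stronglyMeasurable
        (indep_comap_natFiltration hX hind hn)
    filter_upwards [condExp_mul_of_stronglyMeasurable_left (stronglyAdapted_expMartingale hX t n)
      hMZ hZint, hcond] with ω h1 h2
    rw [h1, Pi.mul_apply, h2, mul_one]
  · rw [expMartingale_succ_of_le t hn, condExp_of_stronglyMeasurable ((natFiltration N hX).le n)
      (stronglyAdapted_expMartingale hX t n) (integrable_expMartingale hX hind hint n)]

lemma measure_exists_le_expMartingale_le (hX : ∀ j, Measurable (X j))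
    (hind : iIndepFun (fun k : {k : ℕ // 1 ≤ k ∧ k ≤ N} => X k.1) μ) {t : ℝ}
    (hint : ∀ j, 1 ≤ j → j ≤ N → Integrable (fun ω => exp (t * X j ω)) μ) {ε : ℝ} (hε : 0 < ε) :
    μ {ω | ∃ k ≤ N, ε ≤ expMartingale μ X N t k ω} ≤ ENNReal.ofReal ε⁻¹ := by
  set T := {ω | (ε.toNNReal : ℝ) ≤ (Finset.range (N + 1)).sup' Finset.nonempty_range_add_one
    fun k => expMartingale μ X N t k ω}
  have hmart := martingale_expMartingale hX hind hint
  have hdoob := maximal_ineq hmart.submartingale (fun n ω => expMartingale_nonneg t n ω) N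
    (ε := ε.toNNReal)
  have hint_one : ∫ ω, expMartingale μ X N t N ω ∂μ = 1 := by
    rw [← setIntegral_univ, ← hmart.setIntegral_eq (Nat.zero_le N) MeasurableSet.univ,
      expMartingale_zero]
    simp
  have hT : ENNReal.ofReal (∫ ω in T, expMartingale μ X N t N ω ∂μ) ≤ 1 := by
    rw [← ENNReal.ofReal_one, ← hint_one]
    exact ENNReal.ofReal_le_ofReal (setIntegral_le_integral
      (integrable_expMartingale hX hind hint N) (ae_of_all _ (expMartingale_nonneg t N)))
  calc μ {ω | ∃ k ≤ N, ε ≤ expMartingale μ X N t k ω} ≤ μ T := by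
        refine measure_mono fun ω ⟨k, hk, hle⟩ => ?_
        rw [Set.mem_ofPred_eq, Real.coe_toNNReal _ hε.le]
        exact hle.trans (Finset.le_sup' (fun k => expMartingale μ X N t k ω)
          (Finset.mem_range.mpr (Nat.lt_succ_of_le hk)))
    _ ≤ ENNReal.ofReal ε⁻¹ := by
        rw [ENNReal.ofReal_inv_of_pos hε, ENNReal.le_inv_iff_mul_le, mul_comm]
        exact hdoob.trans hT

lemma inv_pow_le_expMartingale {l r : ℝ} (hl : 0 ≤ l)
    (hmgf : ∀ j, 1 ≤ j → j ≤ N → mgf (X j) μ (-l) ≤ r)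
    (hint : ∀ j, 1 ≤ j → j ≤ N → Integrable (fun ω => exp (-l * X j ω)) μ)
    {k : ℕ} (hkN : k ≤ N) {ω : Ω} (hS : ∑ j ∈ Finset.Icc 1 k, X j ω ≤ 0) :
    (r ^ k)⁻¹ ≤ expMartingale μ X N (-l) k ω := by
  have hmgf_pos : ∀ j ∈ Finset.Icc 1 k, 0 < mgf (X j) μ (-l) := fun j hj =>
    mgf_pos (hint j (Finset.mem_Icc.mp hj).1 ((Finset.mem_Icc.mp hj).2.trans hkN))
  have hprod : ∏ j ∈ Finset.Icc 1 k, mgf (X j) μ (-l) ≤ r ^ k := by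
    simpa using Finset.prod_le_prod (fun j hj => (hmgf_pos j hj).le) fun j hj =>
      hmgf j (Finset.mem_Icc.mp hj).1 ((Finset.mem_Icc.mp hj).2.trans hkN)
  have hexp : 1 ≤ ∏ j ∈ Finset.Icc 1 k, exp (-l * X j ω) := by
    rw [← Real.exp_sum, ← Finset.mul_sum]
    exact one_le_exp (by nlinarith)
  rw [expMartingale, min_eq_left hkN, Finset.prod_div_distrib]
  calc (r ^ k)⁻¹ ≤ (∏ j ∈ Finset.Icc 1 k, mgf (X j) μ (-l))⁻¹ :=
        inv_anti₀ (Finset.prod_pos hmgf_pos) hprod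
    _ ≤ _ := by
        rw [div_eq_mul_inv]
        exact le_mul_of_one_le_left (inv_nonneg.mpr (Finset.prod_pos hmgf_pos).le) hexp

end ExpMartingale

theorem measure_exists_sum_Icc_nonpos_le [IsProbabilityMeasure μ] {X : ℕ → Ω → ℝ} {N : ℕ}
    (hX : ∀ j, Measurable (X j))
    (hind : iIndepFun (fun k : {k : ℕ // 1 ≤ k ∧ k ≤ N} => X k.1) μ) {l r : ℝ}
    (hl : 0 ≤ l) (hr : 0 < r) (hr1 : r ≤ 1)
    (hint : ∀ j, 1 ≤ j → j ≤ N → Integrable (fun ω => exp (-l * X j ω)) μ)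
    (hmgf : ∀ j, 1 ≤ j → j ≤ N → mgf (X j) μ (-l) ≤ r) (a : ℕ) :
    μ {ω | ∃ k, a ≤ k ∧ k ≤ N ∧ ∑ j ∈ Finset.Icc 1 k, X j ω ≤ 0} ≤ ENNReal.ofReal (r ^ a) := by
  rw [← inv_inv (r ^ a)]
  refine (measure_mono ?_).trans
    (measure_exists_le_expMartingale_le hX hind hint (inv_pos.mpr (pow_pos hr a)))
  rintro ω ⟨k, hak, hkN, hS⟩
  refine ⟨k, hkN, ?_⟩
  exact (inv_anti₀ (pow_pos hr k) (pow_le_pow_of_le_one hr.le hr1 hak)).trans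
    (inv_pow_le_expMartingale hl hmgf hint hkN hS)

end ProbabilityTheory

theorem stmt10_general {Θ : Type*} [MeasurableSpace Θ] (Pr : Measure Θ) [IsProbabilityMeasure Pr]
    (N : ℕ) (Y : ℕ → Θ → ℝ) (hmeas : ∀ j, Measurable (Y j))
    (hInd : @iIndepFun _ _ _ _ (fun _ : {k : ℕ // 1 ≤ k ∧ k ≤ N} => (inferInstance : MeasurableSpace ℝ))
      (fun k : {k : ℕ // 1 ≤ k ∧ k ≤ N} => Y k.1) Pr)
    (K : ℝ) (hK : 0 < K) (hmean : ∀ j ∈ Finset.Icc 1 N, (∫ θ, Y j θ ∂Pr) = K)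
    (A : ℝ) (hA : 0 < A) (hbound : ∀ j ∈ Finset.Icc 1 N, ∀ᵐ θ ∂Pr, |Y j θ| ≤ A)
    (S : ℕ → Θ → ℝ) (hS : ∀ k θ, S k θ = ∑ j ∈ Finset.Icc 1 k, Y j θ)
    (α : ℝ) :
    Pr {θ | ∃ k, ⌈α⌉₊ ≤ k ∧ k ≤ N ∧ S k θ ≤ 0}
      ≤ ENNReal.ofReal ((16 / 3) * Real.exp (-α * K ^ 2 / (2 * A ^ 2))) := by
  have hc : 0 ≤ K ^ 2 / (2 * A ^ 2) := by positivity
  have hint : ∀ j, 1 ≤ j → j ≤ N → Integrable (fun θ => exp (-(K / A ^ 2) * Y j θ)) Pr :=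
    fun j hj1 hjN => integrable_exp_mul_of_mem_Icc (hmeas j).aemeasurable
      ((hbound j (Finset.mem_Icc.mpr ⟨hj1, hjN⟩)).mono fun _ h => abs_le.mp h)
  have hmgf : ∀ j, 1 ≤ j → j ≤ N →
      mgf (Y j) Pr (-(K / A ^ 2)) ≤ exp (-(K ^ 2 / (2 * A ^ 2))) := by
    intro j hj1 hjN
    have hj := Finset.mem_Icc.mpr ⟨hj1, hjN⟩
    -- `λ = K / A²` minimises the Hoeffding exponent `-λK + A²λ²/2`.
    calc mgf (Y j) Pr (-(K / A ^ 2))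
        ≤ exp (-(K / A ^ 2) * Pr[Y j] + A ^ 2 * (-(K / A ^ 2)) ^ 2 / 2) :=
          mgf_le_exp_of_abs_le (hmeas j).aemeasurable (hbound j hj) _
      _ = exp (-(K ^ 2 / (2 * A ^ 2))) := by
          rw [hmean j hj]
          congr 1
          field_simp
          ring
  have hmax := measure_exists_sum_Icc_nonpos_le hmeas hInd (by positivity) (exp_pos _)
    (exp_le_one_iff.mpr (neg_nonpos.mpr hc)) hint hmgf ⌈α⌉₊
  simp only [hS]
  refine hmax.trans (ENNReal.ofReal_le_ofReal ?_)
  calc exp (-(K ^ 2 / (2 * A ^ 2))) ^ ⌈α⌉₊ = exp (⌈α⌉₊ * -(K ^ 2 / (2 * A ^ 2))) :=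
        (exp_nat_mul _ _).symm
    _ ≤ exp (α * -(K ^ 2 / (2 * A ^ 2))) :=
        exp_le_exp.mpr (mul_le_mul_of_nonpos_right (Nat.le_ceil α) (neg_nonpos.mpr hc))
    _ = exp (-α * K ^ 2 / (2 * A ^ 2)) := by ring_nf
    _ ≤ 16 / 3 * exp (-α * K ^ 2 / (2 * A ^ 2)) := by
        linarith [exp_pos (-α * K ^ 2 / (2 * A ^ 2))]

/-- One-sided bound from the proof of Theorem 1 of the paper: for i.i.d. random variables
`Y₁, …, Y_N` with mean `K > 0`, bounded a.s. by `A`, and partial sums `S_k = Σ_{j=1}^k Y_j`,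
if `α > 0` satisfies `exp(-α·K²/(2A²)) < 1/4` and `α ≤ N`, then
`P(∃ k ∈ {⌈α⌉, …, N}, S_k ≤ 0) ≤ (16/3)·exp(-α·K²/(2A²))`. -/
theorem stmt10 {Θ : Type*} [MeasurableSpace Θ] (Pr : Measure Θ) [IsProbabilityMeasure Pr]
    (N : ℕ) (hN : 1 ≤ N) (Y : ℕ → Θ → ℝ) (hmeas : ∀ j, Measurable (Y j))
    (hInd : @iIndepFun _ _ _ _ (fun _ : {k : ℕ // 1 ≤ k ∧ k ≤ N} => (inferInstance : MeasurableSpace ℝ))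
      (fun k : {k : ℕ // 1 ≤ k ∧ k ≤ N} => Y k.1) Pr)
    (hid : ∀ i ∈ Finset.Icc 1 N, ∀ j ∈ Finset.Icc 1 N, IdentDistrib (Y i) (Y j) Pr Pr)
    (K : ℝ) (hK : 0 < K) (hmean : ∀ j ∈ Finset.Icc 1 N, (∫ θ, Y j θ ∂Pr) = K)
    (A : ℝ) (hA : 0 < A) (hbound : ∀ j ∈ Finset.Icc 1 N, ∀ᵐ θ ∂Pr, |Y j θ| ≤ A)
    (S : ℕ → Θ → ℝ) (hS : ∀ k θ, S k θ = ∑ j ∈ Finset.Icc 1 k, Y j θ)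
    (α : ℝ) (hα : 0 < α) (hαN : α ≤ (N : ℝ))
    (hsmall : Real.exp (-α * K ^ 2 / (2 * A ^ 2)) < 1 / 4) :
    Pr {θ | ∃ k, ⌈α⌉₊ ≤ k ∧ k ≤ N ∧ S k θ ≤ 0}
      ≤ ENNReal.ofReal ((16 / 3) * Real.exp (-α * K ^ 2 / (2 * A ^ 2))) :=
  stmt10_general Pr N Y hmeas hInd K hK hmean A hA hbound S hS α
end

section
/- Let Q = (1−α)·P₁ + α·P₂ with α ∈ (0,1), and assume log(dQ/dP₁) is integrable with respect to P₁ and P₂ and that KL(Q‖P₁) and KL(P₁‖Q) are finite. Then the P₂-expectation of the log density ratio of the mixture against P₁ decomposes as a positively weighted sum of two KL divergences: ∫ log((dQ/dP₁)(x)) dP₂(x) = (1/α)·KL(Q‖P₁) + ((1−α)/α)·KL(P₁‖Q). -/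
open MeasureTheory ProbabilityTheory

/- Proof idea: integrating `f = log (dQ/dP₁)` is linear in the measure, so
`KL(Q‖P₁) = ∫ f dQ = (1-α) ∫ f dP₁ + α ∫ f dP₂`, while `dP₁/dQ = (dQ/dP₁)⁻¹` gives
`KL(P₁‖Q) = -∫ f dP₁`. Eliminating `∫ f dP₁` between the two identities yields the claim. -/

section Mixture

variable {Ω : Type*} [MeasurableSpace Ω] {μ ν : Measure Ω} {l : ℝ}

instance [IsFiniteMeasure μ] [IsFiniteMeasure ν] : IsFiniteMeasure (mix μ ν l) := by
  have := μ.smul_finite (ENNReal.ofReal_ne_top (r := l))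
  have := ν.smul_finite (ENNReal.ofReal_ne_top (r := 1 - l))
  unfold mix
  infer_instance

lemma absolutelyContinuous_mix_left (hl : 0 < l) : μ ≪ mix μ ν l :=
  (Measure.absolutelyContinuous_smul (ENNReal.ofReal_pos.2 hl).ne').add_right _

lemma integral_mix_s13 {E : Type*} [NormedAddCommGroup E] [NormedSpace ℝ E] {f : Ω → E}
    (hμ : Integrable f μ) (hν : Integrable f ν) (hl₀ : 0 ≤ l) (hl₁ : l ≤ 1) :
    ∫ x, f x ∂(mix μ ν l) = l • ∫ x, f x ∂μ + (1 - l) • ∫ x, f x ∂ν := by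
  rw [mix, integral_add_measure (hμ.smul_measure ENNReal.ofReal_ne_top)
    (hν.smul_measure ENNReal.ofReal_ne_top), integral_smul_measure, integral_smul_measure,
    ENNReal.toReal_ofReal hl₀, ENNReal.toReal_ofReal (sub_nonneg.2 hl₁)]

end Mixture

lemma KL_eq_neg_integral_log_rnDeriv {Ω : Type*} [MeasurableSpace Ω] {μ ν : Measure Ω}
    [SigmaFinite μ] [SigmaFinite ν] (hμν : μ ≪ ν) :
    KL μ ν = -∫ x, Real.log ((ν.rnDeriv μ x).toReal) ∂μ := by
  rw [KL, ← integral_neg]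
  refine integral_congr_ae ?_
  filter_upwards [Measure.inv_rnDeriv' hμν] with x hx
  rw [← hx, Pi.inv_apply, ENNReal.toReal_inv, Real.log_inv]

theorem stmt13_general {Ω : Type*} [MeasurableSpace Ω] (P₁ P₂ : Measure Ω)
    [IsProbabilityMeasure P₁] [IsProbabilityMeasure P₂]
    (α : ℝ) (hα : α ∈ Set.Ioo (0 : ℝ) 1)
    (Q : Measure Ω) (hQ : Q = mix P₁ P₂ (1 - α))
    (hInt₁ : Integrable (fun x => Real.log ((Q.rnDeriv P₁ x).toReal)) P₁)
    (hInt₂ : Integrable (fun x => Real.log ((Q.rnDeriv P₁ x).toReal)) P₂) :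
    (∫ x, Real.log ((Q.rnDeriv P₁ x).toReal) ∂P₂)
      = (1 / α) * KL Q P₁ + ((1 - α) / α) * KL P₁ Q := by
  obtain ⟨hα₀, hα₁⟩ := hα
  have hKLQ : KL Q P₁ = (1 - α) * ∫ x, Real.log ((Q.rnDeriv P₁ x).toReal) ∂P₁
      + α * ∫ x, Real.log ((Q.rnDeriv P₁ x).toReal) ∂P₂ := by
    rw [KL]
    nth_rw 1 [hQ]
    rw [integral_mix_s13 hInt₁ hInt₂ (by linarith) (by linarith), sub_sub_cancel, smul_eq_mul,
      smul_eq_mul]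
  have hP₁Q : P₁ ≪ Q := hQ ▸ absolutelyContinuous_mix_left (by linarith)
  have : IsFiniteMeasure Q := hQ ▸ inferInstance
  rw [hKLQ, KL_eq_neg_integral_log_rnDeriv hP₁Q]
  field_simp
  ring

/-- With `Q = (1-α)·P₁ + α·P₂` and `α ∈ (0,1)`, the `P₂`-expectation of the log density
ratio of the mixture against `P₁` decomposes as a positively weighted sum of two KL
divergences: `∫ log(dQ/dP₁) dP₂ = (1/α)·KL(Q‖P₁) + ((1-α)/α)·KL(P₁‖Q)`. -/
theorem stmt13 {Ω : Type*} [MeasurableSpace Ω] (P₁ P₂ : Measure Ω)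
    [IsProbabilityMeasure P₁] [IsProbabilityMeasure P₂]
    (hac₁ : P₁ ≪ P₂) (hac₂ : P₂ ≪ P₁)
    (α : ℝ) (hα : α ∈ Set.Ioo (0 : ℝ) 1)
    (Q : Measure Ω) (hQ : Q = mix P₁ P₂ (1 - α))
    (hInt₁ : Integrable (fun x => Real.log ((Q.rnDeriv P₁ x).toReal)) P₁)
    (hInt₂ : Integrable (fun x => Real.log ((Q.rnDeriv P₁ x).toReal)) P₂)
    (hKL₁ : Integrable (fun x => Real.log ((Q.rnDeriv P₁ x).toReal)) Q)
    (hKL₂ : Integrable (fun x => Real.log ((P₁.rnDeriv Q x).toReal)) P₁) :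
    (∫ x, Real.log ((Q.rnDeriv P₁ x).toReal) ∂P₂)
      = (1 / α) * KL Q P₁ + ((1 - α) / α) * KL P₁ Q :=
  stmt13_general P₁ P₂ α hα Q hQ hInt₁ hInt₂
end
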